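/- arXiv:2510.12108 — 8 statements merged into one kernel-verified Lean document; each statement's English description precedes it below -/
import Mathlib

section
/- If p is an idempotent element of a continuous t-norm * on [a,b] (i.e., p*p = p), then p*q = min(p,q) for all q in [a,b]. -/
open Set Filter Topology

theorem stmt0
    (a b : ℝ) (hab : a ≤ b)
    (m : ℝ → ℝ → ℝ)
    (hmem : ∀ x ∈ Set.Icc (a:ℝ) b, ∀ y ∈ Set.Icc (a:ℝ) b, m x y ∈ Set.Icc (a:ℝ) b)
    (hcomm : ∀ x ∈ Set.Icc (a:ℝ) b, ∀ y ∈ Set.Icc (a:ℝ) b, m x y = m y x)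
    (hassoc : ∀ x ∈ Set.Icc (a:ℝ) b, ∀ y ∈ Set.Icc (a:ℝ) b, ∀ z ∈ Set.Icc (a:ℝ) b, m (m x y) z = m x (m y z))
    (hunit : ∀ x ∈ Set.Icc (a:ℝ) b, m x b = x)
    (hmono : ∀ x ∈ Set.Icc (a:ℝ) b, ∀ x' ∈ Set.Icc (a:ℝ) b, ∀ y ∈ Set.Icc (a:ℝ) b, ∀ y' ∈ Set.Icc (a:ℝ) b, x ≤ x' → y ≤ y' → m x y ≤ m x' y')
    (hcont : ContinuousOn (fun p : ℝ × ℝ => m p.1 p.2) (Set.Icc (a:ℝ) b ×ˢ Set.Icc (a:ℝ) b))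
    (p : ℝ) (hp : p ∈ Set.Icc a b) (hidem : m p p = p) :
    ∀ q ∈ Set.Icc a b, m p q = min p q := by
  intro q hq
  have ha : a ∈ Set.Icc a b := ⟨le_refl a, hab⟩
  have hb : b ∈ Set.Icc a b := ⟨hab, le_refl b⟩
  rcases le_total p q with h | h
  · -- p ≤ q : m p q = p
    have h1 : m p q ≤ p := by
      have := hmono p hp p hp q hq b hb (le_refl p) hq.2
      rwa [hunit p hp] at this
    have h2 : p ≤ m p q := by
      have := hmono p hp p hp p hp q hq (le_refl p) h
      rwa [hidem] at this
    rw [min_eq_left h]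
    exact le_antisymm h1 h2
  · -- q ≤ p : find c with m p c = q
    have hcontf : ContinuousOn (fun x => m p x) (Set.Icc a b) := by
      have : ContinuousOn (fun x : ℝ => ((p, x) : ℝ × ℝ)) (Set.Icc a b) :=
        (continuous_const.prodMk continuous_id).continuousOn
      exact hcont.comp this (fun x hx => Set.mk_mem_prod hp hx)
    have hfa : m p a ≤ q := by
      have h1 : m p a ≤ m b a := hmono p hp b hb a ha a ha hp.2 (le_refl a)
      have h2 : m b a = a := by rw [hcomm b hb a ha]; exact hunit a ha
      calc m p a ≤ m b a := h1
        _ = a := h2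
        _ ≤ q := hq.1
    have hfb : q ≤ m p b := by rw [hunit p hp]; exact h
    have hiv : q ∈ (fun x => m p x) '' (Set.Icc a b) := by
      apply intermediate_value_Icc hab hcontf
      exact ⟨hfa, hfb⟩
    obtain ⟨c, hc, hcq⟩ := hiv
    simp only [] at hcq
    have key : m p q = q := by
      calc m p q = m p (m p c) := by rw [hcq]
        _ = m (m p p) c := (hassoc p hp p hp c hc).symm
        _ = m p c := by rw [hidem]
        _ = q := hcq
    rw [min_eq_right h, key]
end

section
/- For a continuous t-norm * on [a,b] with residuum →, if u ≤ q and v ≤ q, then v*(q → u) = (q → v)*u. -/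
open Set Filter Topology

theorem stmt3
    (a b : ℝ) (hab : a ≤ b)
    (m : ℝ → ℝ → ℝ)
    (hmem : ∀ x ∈ Set.Icc (a:ℝ) b, ∀ y ∈ Set.Icc (a:ℝ) b, m x y ∈ Set.Icc (a:ℝ) b)
    (hcomm : ∀ x ∈ Set.Icc (a:ℝ) b, ∀ y ∈ Set.Icc (a:ℝ) b, m x y = m y x)
    (hassoc : ∀ x ∈ Set.Icc (a:ℝ) b, ∀ y ∈ Set.Icc (a:ℝ) b, ∀ z ∈ Set.Icc (a:ℝ) b, m (m x y) z = m x (m y z))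
    (hunit : ∀ x ∈ Set.Icc (a:ℝ) b, m x b = x)
    (hmono : ∀ x ∈ Set.Icc (a:ℝ) b, ∀ x' ∈ Set.Icc (a:ℝ) b, ∀ y ∈ Set.Icc (a:ℝ) b, ∀ y' ∈ Set.Icc (a:ℝ) b, x ≤ x' → y ≤ y' → m x y ≤ m x' y')
    (hcont : ContinuousOn (fun p : ℝ × ℝ => m p.1 p.2) (Set.Icc (a:ℝ) b ×ˢ Set.Icc (a:ℝ) b))
    (rr : ℝ → ℝ → ℝ)
    (hrmem : ∀ p ∈ Set.Icc (a:ℝ) b, ∀ s ∈ Set.Icc (a:ℝ) b, rr p s ∈ Set.Icc (a:ℝ) b)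
    (hadj : ∀ p ∈ Set.Icc (a:ℝ) b, ∀ q ∈ Set.Icc (a:ℝ) b, ∀ s ∈ Set.Icc (a:ℝ) b, (m p q ≤ s ↔ q ≤ rr p s))
    (u v q : ℝ) (hu : u ∈ Set.Icc a b) (hv : v ∈ Set.Icc a b) (hq : q ∈ Set.Icc a b)
    (huq : u ≤ q) (hvq : v ≤ q) :
    m v (rr q u) = m (rr q v) u := by
  have hb : b ∈ Set.Icc a b := ⟨hab, le_refl b⟩
  have ha : a ∈ Set.Icc a b := ⟨le_refl a, hab⟩
  -- divisibility: for w ≤ q with w ∈ Icc, m q (rr q w) = w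
  have hdiv : ∀ w ∈ Set.Icc a b, w ≤ q → m q (rr q w) = w := by
    intro w hw hwq
    -- continuity of t ↦ m q t on Icc a b
    have hcf : ContinuousOn (fun t => m q t) (Set.Icc a b) := by
      have : ContinuousOn (fun t => (fun p : ℝ × ℝ => m p.1 p.2) (q, t)) (Set.Icc a b) := by
        apply hcont.comp (Continuous.continuousOn (by continuity))
        intro t ht; exact ⟨hq, ht⟩
      exact this
    have hfa : m q a = a := by
      have h1 : m q a ≤ m b a := hmono q hq b hb a ha a ha hq.2 (le_refl a)
      have h2 : m b a = a := by rw [hcomm b hb a ha]; exact hunit a ha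
      have h3 : a ≤ m q a := (hmem q hq a ha).1
      linarith
    have hfb : m q b = q := hunit q hq
    have hivt := intermediate_value_Icc hab hcf
    have hwmem : w ∈ Set.Icc (m q a) (m q b) := by rw [hfa, hfb]; exact ⟨hw.1, hwq⟩
    obtain ⟨t, ht, hmt⟩ := hivt hwmem
    have htle : t ≤ rr q w := (hadj q hq t ht w hw).1 (le_of_eq hmt)
    have hrw := hrmem q hq w hw
    have h1 : m q (rr q w) ≤ w := (hadj q hq (rr q w) hrw w hw).2 (le_refl _)
    have h2 : w ≤ m q (rr q w) := by
      calc w = m q t := hmt.symm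
        _ ≤ m q (rr q w) := hmono q hq q hq t ht (rr q w) hrw (le_refl q) htle
    linarith
  have hru := hrmem q hq u hu
  have hrv := hrmem q hq v hv
  have h1 : m q (rr q u) = u := hdiv u hu huq
  have h2 : m q (rr q v) = v := hdiv v hv hvq
  calc m v (rr q u) = m (m q (rr q v)) (rr q u) := by rw [h2]
    _ = m (m (rr q v) q) (rr q u) := by rw [hcomm q hq (rr q v) hrv]
    _ = m (rr q v) (m q (rr q u)) := hassoc (rr q v) hrv q hq (rr q u) hru
    _ = m (rr q v) u := by rw [h1]
end

section
/- For a continuous t-norm * on [0,1] with residuum →, if p ≤ q and p = p*(q → p), then either p = q or p is idempotent. -/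
open Set Filter Topology

theorem stmt5
    (m : ℝ → ℝ → ℝ)
    (hmem : ∀ x ∈ Set.Icc (0:ℝ) 1, ∀ y ∈ Set.Icc (0:ℝ) 1, m x y ∈ Set.Icc (0:ℝ) 1)
    (hcomm : ∀ x ∈ Set.Icc (0:ℝ) 1, ∀ y ∈ Set.Icc (0:ℝ) 1, m x y = m y x)
    (hassoc : ∀ x ∈ Set.Icc (0:ℝ) 1, ∀ y ∈ Set.Icc (0:ℝ) 1, ∀ z ∈ Set.Icc (0:ℝ) 1, m (m x y) z = m x (m y z))
    (hunit : ∀ x ∈ Set.Icc (0:ℝ) 1, m x 1 = x)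
    (hmono : ∀ x ∈ Set.Icc (0:ℝ) 1, ∀ x' ∈ Set.Icc (0:ℝ) 1, ∀ y ∈ Set.Icc (0:ℝ) 1, ∀ y' ∈ Set.Icc (0:ℝ) 1, x ≤ x' → y ≤ y' → m x y ≤ m x' y')
    (hcont : ContinuousOn (fun p : ℝ × ℝ => m p.1 p.2) (Set.Icc (0:ℝ) 1 ×ˢ Set.Icc (0:ℝ) 1))
    (rr : ℝ → ℝ → ℝ)
    (hrmem : ∀ p ∈ Set.Icc (0:ℝ) 1, ∀ s ∈ Set.Icc (0:ℝ) 1, rr p s ∈ Set.Icc (0:ℝ) 1)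
    (hadj : ∀ p ∈ Set.Icc (0:ℝ) 1, ∀ q ∈ Set.Icc (0:ℝ) 1, ∀ s ∈ Set.Icc (0:ℝ) 1, (m p q ≤ s ↔ q ≤ rr p s))
    (p q : ℝ) (hp : p ∈ Set.Icc (0:ℝ) 1) (hq : q ∈ Set.Icc (0:ℝ) 1) (hpq : p ≤ q)
    (heq : p = m p (rr q p)) :
    p = q ∨ m p p = p := by
  rcases eq_or_lt_of_le hpq with h | hlt
  · exact Or.inl h
  right
  by_contra hne
  have h01 : (1:ℝ) ∈ Set.Icc (0:ℝ) 1 := ⟨zero_le_one, le_refl 1⟩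
  have h00 : (0:ℝ) ∈ Set.Icc (0:ℝ) 1 := ⟨le_refl 0, zero_le_one⟩
  -- m p p ≤ p
  have hmpp_le : m p p ≤ p := by
    have h1 : m p p ≤ m p 1 := hmono p hp p hp p hp 1 h01 le_rfl hp.2
    rwa [hunit p hp] at h1
  have hmpp_lt : m p p < p := lt_of_le_of_ne hmpp_le hne
  -- the set S = {x ∈ [0,1] | m p x = p}
  set S : Set ℝ := Set.Icc (0:ℝ) 1 ∩ (fun x => m p x) ⁻¹' {p} with hSdef
  have hcontp : ContinuousOn (fun x => m p x) (Set.Icc (0:ℝ) 1) := by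
    have : ContinuousOn ((fun z : ℝ × ℝ => m z.1 z.2) ∘ (fun x => ((p, x) : ℝ × ℝ)))
        (Set.Icc (0:ℝ) 1) := by
      apply hcont.comp ((continuous_const.prodMk continuous_id).continuousOn)
      intro x hx
      exact Set.mk_mem_prod hp hx
    exact this
  have hSclosed : IsClosed S :=
    hcontp.preimage_isClosed_of_isClosed isClosed_Icc isClosed_singleton
  have h1S : (1:ℝ) ∈ S := ⟨h01, by simp [hunit p hp]⟩
  have hSne : S.Nonempty := ⟨1, h1S⟩
  have hSbdd : BddBelow S := ⟨0, fun x hx => hx.1.1⟩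
  set s := sInf S with hsdef
  have hsS : s ∈ S := hSclosed.csInf_mem hSne hSbdd
  have hsI : s ∈ Set.Icc (0:ℝ) 1 := hsS.1
  have hmps : m p s = p := hsS.2
  -- p ≤ s
  have hps : p ≤ s := by
    have h1 : m p s ≤ m 1 s := hmono p hp 1 h01 s hsI s hsI hp.2 le_rfl
    rw [hmps, hcomm 1 h01 s hsI, hunit s hsI] at h1
    exact h1
  -- p < s
  have hps_lt : p < s := by
    rcases lt_or_eq_of_le hps with h | h
    · exact h
    · exact absurd hmps (by rw [← h]; exact ne_of_lt hmpp_lt)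
  -- s is idempotent
  have hssI : m s s ∈ Set.Icc (0:ℝ) 1 := hmem s hsI s hsI
  have hss_le : m s s ≤ s := by
    have h1 : m s s ≤ m s 1 := hmono s hsI s hsI s hsI 1 h01 le_rfl hsI.2
    rwa [hunit s hsI] at h1
  have hssS : m s s ∈ S := by
    refine ⟨hssI, ?_⟩
    show m p (m s s) = p
    rw [← hassoc p hp s hsI s hsI, hmps, hmps]
  have hss : m s s = s := le_antisymm hss_le (csInf_le hSbdd hssS)
  -- s ≤ rr q p
  have hrI : rr q p ∈ Set.Icc (0:ℝ) 1 := hrmem q hq p hp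
  have hrS : rr q p ∈ S := ⟨hrI, heq.symm⟩
  have hsr : s ≤ rr q p := csInf_le hSbdd hrS
  -- m q s ≤ p
  have hqs_le : m q s ≤ p := (hadj q hq s hsI p hp).mpr hsr
  -- contradiction: p < m q s
  rcases le_total s q with hsq | hqs
  · have h1 : m s s ≤ m q s := hmono s hsI q hq s hsI s hsI hsq le_rfl
    rw [hss] at h1
    exact absurd hqs_le (not_le.mpr (lt_of_lt_of_le hps_lt h1))
  · -- q ≤ s : show m q s = q using IVT
    have hconts : ContinuousOn (fun x => m x s) (Set.Icc (0:ℝ) 1) := by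
      have : ContinuousOn ((fun z : ℝ × ℝ => m z.1 z.2) ∘ (fun x => ((x, s) : ℝ × ℝ)))
          (Set.Icc (0:ℝ) 1) := by
        apply hcont.comp ((continuous_id.prodMk continuous_const).continuousOn)
        intro x hx
        exact Set.mk_mem_prod hx hsI
      exact this
    have hsub : Set.Icc (0:ℝ) s ⊆ Set.Icc (0:ℝ) 1 :=
      Set.Icc_subset_Icc le_rfl hsI.2
    have hcont0s : ContinuousOn (fun x => m x s) (Set.Icc (0:ℝ) s) := hconts.mono hsub
    have hf0 : m 0 s = 0 := by
      have h1 : m 0 s ≤ m 0 1 := hmono 0 h00 0 h00 s hsI 1 h01 le_rfl hsI.2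
      rw [hunit 0 h00] at h1
      exact le_antisymm h1 (hmem 0 h00 s hsI).1
    have hivt := intermediate_value_Icc hsI.1 hcont0s
    have hqmem : q ∈ Set.Icc (m 0 s) (m s s) := by
      rw [hf0, hss]; exact ⟨hq.1, hqs⟩
    obtain ⟨c, hcmem, hc⟩ := hivt hqmem
    have hcI : c ∈ Set.Icc (0:ℝ) 1 := hsub hcmem
    have hmqs : m q s = q := by
      have hc' : m c s = q := hc
      have h2 : m (m c s) s = m c (m s s) := hassoc c hcI s hsI s hsI
      rw [hss] at h2
      rw [← hc', h2]
    rw [hmqs] at hqs_le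
    exact absurd hqs_le (not_le.mpr hlt)
end

section
/- For a continuous t-norm * on [0,1] with residuum →, if p < q and p = p*(q → p)^n holds for all n (where x^n denotes the n-fold *-power), then p equals the limit s of (q → p)^n and hence p is idempotent. -/
open Set Filter Topology

theorem stmt7
    (m : ℝ → ℝ → ℝ)
    (hmem : ∀ x ∈ Set.Icc (0:ℝ) 1, ∀ y ∈ Set.Icc (0:ℝ) 1, m x y ∈ Set.Icc (0:ℝ) 1)
    (hcomm : ∀ x ∈ Set.Icc (0:ℝ) 1, ∀ y ∈ Set.Icc (0:ℝ) 1, m x y = m y x)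
    (hassoc : ∀ x ∈ Set.Icc (0:ℝ) 1, ∀ y ∈ Set.Icc (0:ℝ) 1, ∀ z ∈ Set.Icc (0:ℝ) 1, m (m x y) z = m x (m y z))
    (hunit : ∀ x ∈ Set.Icc (0:ℝ) 1, m x 1 = x)
    (hmono : ∀ x ∈ Set.Icc (0:ℝ) 1, ∀ x' ∈ Set.Icc (0:ℝ) 1, ∀ y ∈ Set.Icc (0:ℝ) 1, ∀ y' ∈ Set.Icc (0:ℝ) 1, x ≤ x' → y ≤ y' → m x y ≤ m x' y')
    (hcont : ContinuousOn (fun p : ℝ × ℝ => m p.1 p.2) (Set.Icc (0:ℝ) 1 ×ˢ Set.Icc (0:ℝ) 1))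
    (rr : ℝ → ℝ → ℝ)
    (hrmem : ∀ p ∈ Set.Icc (0:ℝ) 1, ∀ s ∈ Set.Icc (0:ℝ) 1, rr p s ∈ Set.Icc (0:ℝ) 1)
    (hadj : ∀ p ∈ Set.Icc (0:ℝ) 1, ∀ q ∈ Set.Icc (0:ℝ) 1, ∀ s ∈ Set.Icc (0:ℝ) 1, (m p q ≤ s ↔ q ≤ rr p s))
    (p q : ℝ) (hp : p ∈ Set.Icc (0:ℝ) 1) (hq : q ∈ Set.Icc (0:ℝ) 1) (hpq : p < q)
    (heq : ∀ n : ℕ, p = m p ((m (rr q p))^[n] 1)) :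
    Filter.Tendsto (fun n : ℕ => (m (rr q p))^[n] 1) Filter.atTop (nhds p) ∧
      m p p = p := by
  have h01 : (0:ℝ) ∈ Set.Icc (0:ℝ) 1 := ⟨le_rfl, zero_le_one⟩
  have h11 : (1:ℝ) ∈ Set.Icc (0:ℝ) 1 := ⟨zero_le_one, le_rfl⟩
  set r := rr q p with hr_def
  have hr : r ∈ Set.Icc (0:ℝ) 1 := hrmem q hq p hp
  set a : ℕ → ℝ := fun n => (m r)^[n] 1 with ha_def
  have ha0 : a 0 = 1 := rfl
  have hasucc : ∀ n, a (n + 1) = m r (a n) := by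
    intro n; simp [ha_def, Function.iterate_succ_apply']
  have ha : ∀ n, a n ∈ Set.Icc (0:ℝ) 1 := by
    intro n; induction n with
    | zero => exact h11
    | succ k ih => rw [hasucc]; exact hmem r hr _ ih
  -- m x y ≤ y for x,y in the interval
  have hle2 : ∀ x ∈ Set.Icc (0:ℝ) 1, ∀ y ∈ Set.Icc (0:ℝ) 1, m x y ≤ y := by
    intro x hx y hy
    calc m x y ≤ m 1 y := hmono x hx 1 h11 y hy y hy hx.2 le_rfl
    _ = m y 1 := hcomm 1 h11 y hy
    _ = y := hunit y hy
  have hanti : Antitone a := by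
    apply antitone_nat_of_succ_le
    intro n
    rw [hasucc]
    exact hle2 r hr (a n) (ha n)
  have hbdd : BddBelow (Set.range a) := ⟨0, by rintro _ ⟨n, rfl⟩; exact (ha n).1⟩
  set s := ⨅ n, a n with hs_def
  have hs : Filter.Tendsto a Filter.atTop (nhds s) :=
    tendsto_atTop_ciInf hanti hbdd
  have hsmem : s ∈ Set.Icc (0:ℝ) 1 :=
    ⟨le_ciInf fun n => (ha n).1, le_trans (ciInf_le hbdd 0) (le_of_eq ha0)⟩
  -- continuity helper
  have hcont2 : ∀ (u v : ℕ → ℝ) (x y : ℝ), (∀ n, u n ∈ Set.Icc (0:ℝ) 1) →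
      (∀ n, v n ∈ Set.Icc (0:ℝ) 1) → x ∈ Set.Icc (0:ℝ) 1 → y ∈ Set.Icc (0:ℝ) 1 →
      Filter.Tendsto u Filter.atTop (nhds x) → Filter.Tendsto v Filter.atTop (nhds y) →
      Filter.Tendsto (fun n => m (u n) (v n)) Filter.atTop (nhds (m x y)) := by
    intro u v x y hu hv hx hy htu htv
    have hxy : (x, y) ∈ Set.Icc (0:ℝ) 1 ×ˢ Set.Icc (0:ℝ) 1 := ⟨hx, hy⟩
    have h1 : Filter.Tendsto (fun n => (u n, v n)) Filter.atTop
        (nhdsWithin (x, y) (Set.Icc (0:ℝ) 1 ×ˢ Set.Icc (0:ℝ) 1)) := by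
      apply tendsto_nhdsWithin_of_tendsto_nhds_of_eventually_within
      · exact htu.prodMk_nhds htv
      · exact Filter.Eventually.of_forall fun n => ⟨hu n, hv n⟩
    exact (hcont (x, y) hxy).tendsto.comp h1
  -- p = m p s
  have hps : p = m p s := by
    have h1 : Filter.Tendsto (fun n => m p (a n)) Filter.atTop (nhds (m p s)) :=
      hcont2 (fun _ => p) a p s (fun _ => hp) ha hp hsmem tendsto_const_nhds hs
    have h2 : Filter.Tendsto (fun n => m p (a n)) Filter.atTop (nhds p) := by
      have : (fun n => m p (a n)) = fun _ : ℕ => p := by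
        funext n; exact (heq n).symm
      rw [this]; exact tendsto_const_nhds
    exact tendsto_nhds_unique h2 h1
  -- p ≤ s
  have hple : p ≤ s := le_ciInf fun n => (heq n) ▸ hle2 p hp (a n) (ha n)
  -- a (n + k) = m (a n) (a k)
  have hadd : ∀ n k, a (n + k) = m (a n) (a k) := by
    intro n k; induction k with
    | zero => simp [ha0, hunit (a n) (ha n)]
    | succ j ih =>
      rw [show n + (j + 1) = (n + j) + 1 by ring, hasucc, ih, hasucc]
      rw [hcomm r hr (m (a n) (a j)) (hmem _ (ha n) _ (ha j)),
        hassoc (a n) (ha n) (a j) (ha j) r hr,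
        hcomm (a j) (ha j) r hr]
  -- m s s = s
  have hss : m s s = s := by
    have h2n : Filter.Tendsto (fun n => a (2 * n)) Filter.atTop (nhds s) := by
      apply hs.comp
      exact tendsto_atTop_mono (fun n => Nat.le_mul_of_pos_left n two_pos) tendsto_id
    have h2n' : Filter.Tendsto (fun n => m (a n) (a n)) Filter.atTop (nhds (m s s)) :=
      hcont2 a a s s ha ha hsmem hsmem hs hs
    have : (fun n => a (2 * n)) = fun n => m (a n) (a n) := by
      funext n; rw [two_mul, hadd]
    rw [this] at h2n
    exact tendsto_nhds_unique h2n' h2n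
  -- m q s ≤ p
  have hmqr : m q r ≤ p := (hadj q hq r hr p hp).mpr le_rfl
  have hqan : ∀ n, m q (a (n + 1)) ≤ p := by
    intro n
    rw [hasucc, hcomm r hr (a n) (ha n),
      ← hassoc q hq (a n) (ha n) r hr]
    calc m (m q (a n)) r ≤ m (m q 1) r := by
          apply hmono _ (hmem q hq _ (ha n)) _ (hmem q hq 1 h11) r hr r hr _ le_rfl
          exact hmono q hq q hq _ (ha n) 1 h11 le_rfl (ha n).2
      _ = m q r := by rw [hunit q hq]
      _ ≤ p := hmqr
  have hqs : m q s ≤ p := by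
    have h1 : Filter.Tendsto (fun n => m q (a (n + 1))) Filter.atTop (nhds (m q s)) := by
      apply hcont2 (fun _ => q) (fun n => a (n + 1)) q s (fun _ => hq) (fun n => ha (n + 1))
        hq hsmem tendsto_const_nhds
      exact hs.comp (tendsto_add_atTop_nat 1)
    exact le_of_tendsto h1 (Filter.Eventually.of_forall hqan)
  -- s ≤ p
  have hsp : s ≤ p := by
    rcases le_or_gt s q with h | h
    · calc s = m s s := hss.symm
        _ ≤ m q s := hmono s hsmem q hq s hsmem s hsmem h le_rfl
        _ ≤ p := hqs
    · exfalso
      -- IVT: find y with m s y = q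
      have hgc : ContinuousOn (fun x => m s x) (Set.Icc (0:ℝ) 1) := by
        have := hcont.comp (f := fun x : ℝ => ((s, x) : ℝ × ℝ))
          (Continuous.continuousOn (continuous_const.prodMk continuous_id))
          (fun x hx => Set.mk_mem_prod hsmem hx)
        exact this
      have hg0 : m s 0 ≤ 0 := by
        calc m s 0 ≤ m 1 0 := hmono s hsmem 1 h11 0 h01 0 h01 hsmem.2 le_rfl
          _ = m 0 1 := hcomm 1 h11 0 h01
          _ = 0 := hunit 0 h01
      have hg1 : m s 1 = s := hunit s hsmem
      have hqmem : q ∈ Set.Icc (m s 0) (m s 1) := by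
        rw [hg1]; exact ⟨le_trans hg0 hq.1, le_of_lt h⟩
      obtain ⟨y, hy, hmy⟩ := intermediate_value_Icc zero_le_one hgc hqmem
      have : m s q = q := by
        rw [← hmy, ← hassoc s hsmem s hsmem y hy, hss]
      have h2 : m s q ≤ p := by
        rw [hcomm s hsmem q hq]; exact hqs
      rw [this] at h2
      exact absurd h2 (not_le.mpr hpq)
  have hsep : s = p := le_antisymm hsp hple
  constructor
  · rw [← hsep]; exact hs
  · rw [hsep] at hss; exact hss
end

section
/- For a continuous t-norm * on [0,1] with residuum →, there exists a morphism φ: {p} ⇸ {q} of one-element [0,1]_*-sets if and only if p = q, or p < q and p is idempotent; and in that case necessarily φ(p,q) = p. -/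
/-!
Conditions (M1)–(M4) for a morphism `{p} ⇸ {q}` collapse to four inequalities on the single
value `u = φ(p,q)`. (M1) and (M4) squeeze `u` to `p`, and then (M4) says `p ≤ p * (q → p)`,
i.e. `p * r = p` for `r = q → p`. By continuity there is a least `e` with `p * e = p`; it is
idempotent, since `e * e` has the same property, and `p ≤ e ≤ r`, so `q * e ≤ q * r ≤ p`.
By the intermediate value theorem an idempotent absorbs everything below it. Hence `e ≤ q`
forces `e = e * e ≤ q * e ≤ p`, i.e. `e = p`, while `q ≤ e` would give `q = q * e ≤ p`.
-/

open Set

structure IsTNormOn (m : ℝ → ℝ → ℝ) : Prop where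
  mapsTo : ∀ x ∈ Icc (0:ℝ) 1, ∀ y ∈ Icc (0:ℝ) 1, m x y ∈ Icc (0:ℝ) 1
  comm : ∀ x ∈ Icc (0:ℝ) 1, ∀ y ∈ Icc (0:ℝ) 1, m x y = m y x
  assoc : ∀ x ∈ Icc (0:ℝ) 1, ∀ y ∈ Icc (0:ℝ) 1, ∀ z ∈ Icc (0:ℝ) 1,
    m (m x y) z = m x (m y z)
  mul_one : ∀ x ∈ Icc (0:ℝ) 1, m x 1 = x
  mono : ∀ x ∈ Icc (0:ℝ) 1, ∀ x' ∈ Icc (0:ℝ) 1, ∀ y ∈ Icc (0:ℝ) 1,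
    ∀ y' ∈ Icc (0:ℝ) 1, x ≤ x' → y ≤ y' → m x y ≤ m x' y'

structure IsResiduumOn (m rr : ℝ → ℝ → ℝ) : Prop where
  mapsTo : ∀ a ∈ Icc (0:ℝ) 1, ∀ b ∈ Icc (0:ℝ) 1, rr a b ∈ Icc (0:ℝ) 1
  adj : ∀ a ∈ Icc (0:ℝ) 1, ∀ b ∈ Icc (0:ℝ) 1, ∀ c ∈ Icc (0:ℝ) 1,
    (m a b ≤ c ↔ b ≤ rr a c)

/-- (M1)–(M4) for `φ : {p} ⇸ {q}`, written in terms of its single value `u = φ(p,q)`. -/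
def IsSingletonMorphism (m rr : ℝ → ℝ → ℝ) (p q u : ℝ) : Prop :=
  u ≤ min p q ∧ m (m (rr q q) u) (rr p p) ≤ u ∧ m u (rr p u) ≤ q ∧ p ≤ m u (rr q u)

variable {m rr : ℝ → ℝ → ℝ} {x y a b e p q : ℝ}

lemma continuousOn_apply_left {s : Set ℝ}
    (hcont : ContinuousOn (fun z : ℝ × ℝ => m z.1 z.2) (s ×ˢ s)) (ha : a ∈ s) :
    ContinuousOn (m a ·) s :=
  hcont.comp (continuousOn_const.prodMk continuousOn_id) fun _ ht => mk_mem_prod ha ht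

namespace IsTNormOn

variable (hm : IsTNormOn m)
include hm

lemma mul_le_left (hx : x ∈ Icc (0:ℝ) 1) (hy : y ∈ Icc (0:ℝ) 1) : m x y ≤ x := by
  simpa only [hm.mul_one x hx] using hm.mono x hx x hx y hy 1 unitInterval.one_mem le_rfl hy.2

lemma mul_le_right (hx : x ∈ Icc (0:ℝ) 1) (hy : y ∈ Icc (0:ℝ) 1) : m x y ≤ y :=
  hm.comm x hx y hy ▸ hm.mul_le_left hy hx

lemma mul_zero (hx : x ∈ Icc (0:ℝ) 1) : m x 0 = 0 :=
  le_antisymm (hm.mul_le_right hx unitInterval.zero_mem)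
    (hm.mapsTo x hx 0 unitInterval.zero_mem).1

section Continuous

variable (hcont : ContinuousOn (fun z : ℝ × ℝ => m z.1 z.2) (Icc (0:ℝ) 1 ×ˢ Icc (0:ℝ) 1))
include hcont

lemma mul_idempotent_of_le (he : e ∈ Icc (0:ℝ) 1) (hee : m e e = e) (hx : x ∈ Icc (0:ℝ) 1)
    (hxe : x ≤ e) : m x e = x := by
  obtain ⟨t, ht, hext : m e t = x⟩ : x ∈ (m e ·) '' Icc (0:ℝ) 1 := by
    refine intermediate_value_Icc zero_le_one (continuousOn_apply_left hcont he) ?_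
    rw [hm.mul_zero he, hm.mul_one e he]
    exact ⟨hx.1, hxe⟩
  calc m x e = m (m t e) e := by rw [← hext, hm.comm e he t ht]
    _ = m t e := by rw [hm.assoc t ht e he e he, hee]
    _ = x := by rw [hm.comm t ht e he, hext]

lemma exists_idempotent_of_mul_eq (hx : x ∈ Icc (0:ℝ) 1) (ha : a ∈ Icc (0:ℝ) 1)
    (hxa : m x a = x) : ∃ e ∈ Icc (0:ℝ) 1, m e e = e ∧ e ≤ a ∧ m x e = x := by
  set S := Icc (0:ℝ) 1 ∩ (m x ·) ⁻¹' {x}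
  have hS : IsClosed S :=
    (continuousOn_apply_left hcont hx).preimage_isClosed_of_isClosed isClosed_Icc
      isClosed_singleton
  have hS_bdd : BddBelow S := ⟨0, fun t ht => ht.1.1⟩
  have haS : a ∈ S := ⟨ha, hxa⟩
  obtain ⟨he, hxe : m x (sInf S) = x⟩ : sInf S ∈ S := hS.csInf_mem ⟨a, haS⟩ hS_bdd
  have heeS : m (sInf S) (sInf S) ∈ S := by
    refine ⟨hm.mapsTo _ he _ he, ?_⟩
    change m x (m (sInf S) (sInf S)) = x
    rw [← hm.assoc x hx _ he _ he, hxe, hxe]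
  exact ⟨sInf S, he, le_antisymm (hm.mul_le_left he he) (csInf_le hS_bdd heeS),
    csInf_le hS_bdd haS, hxe⟩

end Continuous

end IsTNormOn

namespace IsResiduumOn

variable (hr : IsResiduumOn m rr)
include hr

lemma mul_residuum_le (ha : a ∈ Icc (0:ℝ) 1) (hb : b ∈ Icc (0:ℝ) 1) : m a (rr a b) ≤ b :=
  (hr.adj a ha _ (hr.mapsTo a ha b hb) b hb).mpr le_rfl

lemma le_residuum (hm : IsTNormOn m) (ha : a ∈ Icc (0:ℝ) 1) (hb : b ∈ Icc (0:ℝ) 1) :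
    b ≤ rr a b :=
  (hr.adj a ha b hb b hb).mp (hm.mul_le_right ha hb)

lemma residuum_self (hm : IsTNormOn m) (ha : a ∈ Icc (0:ℝ) 1) : rr a a = 1 :=
  le_antisymm (hr.mapsTo a ha a ha).2
    ((hr.adj a ha 1 unitInterval.one_mem a ha).mp (hm.mul_one a ha).le)

end IsResiduumOn

lemma IsTNormOn.mul_self_eq_of_le_mul_residuum (hm : IsTNormOn m)
    (hcont : ContinuousOn (fun z : ℝ × ℝ => m z.1 z.2) (Icc (0:ℝ) 1 ×ˢ Icc (0:ℝ) 1))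
    (hr : IsResiduumOn m rr) (hp : p ∈ Icc (0:ℝ) 1) (hq : q ∈ Icc (0:ℝ) 1) (hpq : p < q)
    (h : p ≤ m p (rr q p)) : m p p = p := by
  have hqp := hr.mapsTo q hq p hp
  obtain ⟨e, he, hee, her, hpe⟩ :=
    hm.exists_idempotent_of_mul_eq hcont hp hqp (le_antisymm (hm.mul_le_left hp hqp) h)
  have hqe : m q e ≤ p :=
    (hm.mono q hq q hq e he _ hqp le_rfl her).trans (hr.mul_residuum_le hq hp)
  rcases le_total e q with heq_le | hqe_le
  · have hep : e ≤ p := calc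
      e = m e e := hee.symm
      _ ≤ m q e := hm.mono e he q hq e he e he heq_le le_rfl
      _ ≤ p := hqe
    have hpe_le : p ≤ e := hpe ▸ hm.mul_le_right hp he
    rwa [le_antisymm hep hpe_le] at hee
  · exact absurd (hm.mul_idempotent_of_le hcont he hee hq hqe_le ▸ hqe) hpq.not_ge

namespace IsSingletonMorphism

lemma eq_left {u : ℝ} (hm : IsTNormOn m) (hr : IsResiduumOn m rr) (hq : q ∈ Icc (0:ℝ) 1)
    (hu : u ∈ Icc (0:ℝ) 1) (h : IsSingletonMorphism m rr p q u) : u = p :=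
  le_antisymm (h.1.trans (min_le_left p q))
    (h.2.2.2.trans (hm.mul_le_left hu (hr.mapsTo q hq u hu)))

lemma of_le (hm : IsTNormOn m) (hr : IsResiduumOn m rr) (hp : p ∈ Icc (0:ℝ) 1)
    (hq : q ∈ Icc (0:ℝ) 1) (hpq : p ≤ q) (h : p ≤ m p (rr q p)) :
    IsSingletonMorphism m rr p q p := by
  have hpp := hr.mapsTo p hp p hp
  have hqq := hr.mapsTo q hq q hq
  refine ⟨le_min le_rfl hpq, ?_, (hr.mul_residuum_le hp hp).trans hpq, h⟩
  calc m (m (rr q q) p) (rr p p) ≤ m p (rr p p) :=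
        hm.mono _ (hm.mapsTo _ hqq p hp) p hp _ hpp _ hpp (hm.mul_le_right hqq hp) le_rfl
    _ ≤ p := hr.mul_residuum_le hp hp

end IsSingletonMorphism

theorem stmt10
    (m : ℝ → ℝ → ℝ)
    (hmem : ∀ x ∈ Set.Icc (0:ℝ) 1, ∀ y ∈ Set.Icc (0:ℝ) 1, m x y ∈ Set.Icc (0:ℝ) 1)
    (hcomm : ∀ x ∈ Set.Icc (0:ℝ) 1, ∀ y ∈ Set.Icc (0:ℝ) 1, m x y = m y x)
    (hassoc : ∀ x ∈ Set.Icc (0:ℝ) 1, ∀ y ∈ Set.Icc (0:ℝ) 1, ∀ z ∈ Set.Icc (0:ℝ) 1, m (m x y) z = m x (m y z))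
    (hunit : ∀ x ∈ Set.Icc (0:ℝ) 1, m x 1 = x)
    (hmono : ∀ x ∈ Set.Icc (0:ℝ) 1, ∀ x' ∈ Set.Icc (0:ℝ) 1, ∀ y ∈ Set.Icc (0:ℝ) 1, ∀ y' ∈ Set.Icc (0:ℝ) 1, x ≤ x' → y ≤ y' → m x y ≤ m x' y')
    (hcont : ContinuousOn (fun p : ℝ × ℝ => m p.1 p.2) (Set.Icc (0:ℝ) 1 ×ˢ Set.Icc (0:ℝ) 1))
    (rr : ℝ → ℝ → ℝ)
    (hrmem : ∀ p ∈ Set.Icc (0:ℝ) 1, ∀ s ∈ Set.Icc (0:ℝ) 1, rr p s ∈ Set.Icc (0:ℝ) 1)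
    (hadj : ∀ p ∈ Set.Icc (0:ℝ) 1, ∀ q ∈ Set.Icc (0:ℝ) 1, ∀ s ∈ Set.Icc (0:ℝ) 1, (m p q ≤ s ↔ q ≤ rr p s))
    (p q : ℝ) (hp : p ∈ Set.Icc (0:ℝ) 1) (hq : q ∈ Set.Icc (0:ℝ) 1) :
    ((∃ u ∈ Set.Icc (0:ℝ) 1, u ≤ min p q ∧
        m (m (rr q q) u) (rr p p) ≤ u ∧
        m u (rr p u) ≤ q ∧
        p ≤ m u (rr q u)) ↔ (p = q ∨ (p < q ∧ m p p = p))) ∧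
    (∀ u ∈ Set.Icc (0:ℝ) 1, (u ≤ min p q ∧
        m (m (rr q q) u) (rr p p) ≤ u ∧
        m u (rr p u) ≤ q ∧
        p ≤ m u (rr q u)) → u = p) := by
  have hm : IsTNormOn m := ⟨hmem, hcomm, hassoc, hunit, hmono⟩
  have hr : IsResiduumOn m rr := ⟨hrmem, hadj⟩
  have eq_p (u : ℝ) (hu : u ∈ Icc (0:ℝ) 1) (h : IsSingletonMorphism m rr p q u) : u = p :=
    IsSingletonMorphism.eq_left hm hr hq hu h
  refine ⟨⟨?_, ?_⟩, eq_p⟩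
  · rintro ⟨u, hu, h⟩
    obtain rfl := eq_p u hu h
    obtain heq | hlt := (h.1.trans (min_le_right u q)).eq_or_lt
    · exact .inl heq
    · exact .inr ⟨hlt, hm.mul_self_eq_of_le_mul_residuum hcont hr hu hq hlt h.2.2.2⟩
  · rintro (rfl | ⟨hlt, hpp⟩)
    · refine ⟨p, hp, IsSingletonMorphism.of_le hm hr hp hp le_rfl ?_⟩
      rw [hr.residuum_self hm hp, hm.mul_one p hp]
    · refine ⟨p, hp, IsSingletonMorphism.of_le hm hr hp hq hlt.le ?_⟩
      calc p = m p p := hpp.symm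
        _ ≤ m p (rr q p) :=
          hm.mono p hp p hp p hp _ (hr.mapsTo q hq p hp) le_rfl (hr.le_residuum hm hq hp)
end

section
/- For a continuous t-norm * on [0,1] with residuum →, if p and p' are elements of [0,1] each of which is either equal to q or is an idempotent less than q, then p*(q → p') = min(p, p'). -/
open Set Filter Topology

theorem stmt13
    (m : ℝ → ℝ → ℝ)
    (hmem : ∀ x ∈ Set.Icc (0:ℝ) 1, ∀ y ∈ Set.Icc (0:ℝ) 1, m x y ∈ Set.Icc (0:ℝ) 1)
    (hcomm : ∀ x ∈ Set.Icc (0:ℝ) 1, ∀ y ∈ Set.Icc (0:ℝ) 1, m x y = m y x)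
    (hassoc : ∀ x ∈ Set.Icc (0:ℝ) 1, ∀ y ∈ Set.Icc (0:ℝ) 1, ∀ z ∈ Set.Icc (0:ℝ) 1, m (m x y) z = m x (m y z))
    (hunit : ∀ x ∈ Set.Icc (0:ℝ) 1, m x 1 = x)
    (hmono : ∀ x ∈ Set.Icc (0:ℝ) 1, ∀ x' ∈ Set.Icc (0:ℝ) 1, ∀ y ∈ Set.Icc (0:ℝ) 1, ∀ y' ∈ Set.Icc (0:ℝ) 1, x ≤ x' → y ≤ y' → m x y ≤ m x' y')
    (hcont : ContinuousOn (fun p : ℝ × ℝ => m p.1 p.2) (Set.Icc (0:ℝ) 1 ×ˢ Set.Icc (0:ℝ) 1))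
    (rr : ℝ → ℝ → ℝ)
    (hrmem : ∀ p ∈ Set.Icc (0:ℝ) 1, ∀ s ∈ Set.Icc (0:ℝ) 1, rr p s ∈ Set.Icc (0:ℝ) 1)
    (hadj : ∀ p ∈ Set.Icc (0:ℝ) 1, ∀ q ∈ Set.Icc (0:ℝ) 1, ∀ s ∈ Set.Icc (0:ℝ) 1, (m p q ≤ s ↔ q ≤ rr p s))
    (p p' q : ℝ) (hp : p ∈ Set.Icc (0:ℝ) 1) (hp' : p' ∈ Set.Icc (0:ℝ) 1) (hq : q ∈ Set.Icc (0:ℝ) 1)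
    (h1 : p = q ∨ (m p p = p ∧ p < q))
    (h2 : p' = q ∨ (m p' p' = p' ∧ p' < q)) :
    m p (rr q p') = min p p' := by

  have h01 : (1:ℝ) ∈ Set.Icc (0:ℝ) 1 := by constructor <;> norm_num
  have hpq : p ≤ q := by rcases h1 with h|h; exacts [h.le, h.2.le]
  rcases h2 with rfl | ⟨hid', hlt'⟩
  · -- p' = q
    have hr1 : rr p' p' = 1 := by
      have h1le : (1:ℝ) ≤ rr p' p' :=
        (hadj p' hp' 1 h01 p' hp').mp (by rw [hunit p' hp'])
      have := (hrmem p' hp' p' hp').2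
      linarith
    rw [hr1, hunit p hp, min_eq_left hpq]
  · set r := rr q p' with hrdef
    have hrm : r ∈ Set.Icc (0:ℝ) 1 := hrmem q hq p' hp'
    have hp'r : p' ≤ r := by
      apply (hadj q hq p' hp' p' hp').mp
      rw [hcomm q hq p' hp']
      calc m p' q ≤ m p' 1 := hmono p' hp' p' hp' q hq 1 h01 le_rfl hq.2
        _ = p' := hunit p' hp'
    have hqr : m q r ≤ p' := (hadj q hq r hrm p' hp').mpr le_rfl
    rcases le_or_gt p' p with hle | hlt
    · rw [min_eq_right hle]
      have hub : m p r ≤ p' := le_trans (hmono p hp q hq r hrm r hrm hpq le_rfl) hqr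
      have hlb : p' ≤ m p r := by
        calc p' = m p' p' := hid'.symm
          _ ≤ m p r := hmono p' hp' p hp p' hp' r hrm hle hp'r
      linarith
    · rw [min_eq_left hlt.le]
      have hidp : m p p = p := by
        rcases h1 with rfl | h
        · exfalso; linarith
        · exact h.1
      have hub : m p r ≤ p := by
        calc m p r ≤ m p 1 := hmono p hp p hp r hrm 1 h01 le_rfl hrm.2
          _ = p := hunit p hp
      have hlb : p ≤ m p r := by
        calc p = m p p := hidp.symm
          _ ≤ m p r := hmono p hp p hp p hp r hrm le_rfl (le_trans hlt.le hp'r)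
      linarith
end

section
/- For a continuous t-norm * on [0,1], if * is not the minimum t-norm, then there exist a < b in [0,1] such that a and b are idempotent and no element of the open interval (a,b) is idempotent. -/
open Set Filter Topology

theorem stmt16
    (m : ℝ → ℝ → ℝ)
    (hmem : ∀ x ∈ Set.Icc (0:ℝ) 1, ∀ y ∈ Set.Icc (0:ℝ) 1, m x y ∈ Set.Icc (0:ℝ) 1)
    (hcomm : ∀ x ∈ Set.Icc (0:ℝ) 1, ∀ y ∈ Set.Icc (0:ℝ) 1, m x y = m y x)
    (hassoc : ∀ x ∈ Set.Icc (0:ℝ) 1, ∀ y ∈ Set.Icc (0:ℝ) 1, ∀ z ∈ Set.Icc (0:ℝ) 1, m (m x y) z = m x (m y z))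
    (hunit : ∀ x ∈ Set.Icc (0:ℝ) 1, m x 1 = x)
    (hmono : ∀ x ∈ Set.Icc (0:ℝ) 1, ∀ x' ∈ Set.Icc (0:ℝ) 1, ∀ y ∈ Set.Icc (0:ℝ) 1, ∀ y' ∈ Set.Icc (0:ℝ) 1, x ≤ x' → y ≤ y' → m x y ≤ m x' y')
    (hcont : ContinuousOn (fun p : ℝ × ℝ => m p.1 p.2) (Set.Icc (0:ℝ) 1 ×ˢ Set.Icc (0:ℝ) 1))
    (hnotmin : ¬ (∀ p ∈ Set.Icc (0:ℝ) 1, ∀ q ∈ Set.Icc (0:ℝ) 1, m p q = min p q)) :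
    ∃ a ∈ Set.Icc (0:ℝ) 1, ∃ b ∈ Set.Icc (0:ℝ) 1, a < b ∧ m a a = a ∧ m b b = b ∧
      ∀ c, a < c → c < b → m c c ≠ c := by
  have h01 : (0:ℝ) ∈ Set.Icc (0:ℝ) 1 := by constructor <;> norm_num
  have h11 : (1:ℝ) ∈ Set.Icc (0:ℝ) 1 := by constructor <;> norm_num
  -- there exists a non-idempotent point
  have key : ∃ c ∈ Set.Icc (0:ℝ) 1, m c c ≠ c := by
    by_contra h
    push_neg at h
    apply hnotmin
    intro p hp q hq
    have hmin : ∀ p ∈ Set.Icc (0:ℝ) 1, ∀ q ∈ Set.Icc (0:ℝ) 1, p ≤ q → m p q = p := by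
      intro p hp q hq hpq
      have h1 := hmono p hp p hp q hq 1 h11 le_rfl hq.2
      rw [hunit p hp] at h1
      have h2 := hmono p hp p hp p hp q hq le_rfl hpq
      rw [h p hp] at h2
      linarith
    rcases le_total p q with hpq | hqp
    · rw [min_eq_left hpq, hmin p hp q hq hpq]
    · rw [min_eq_right hqp, hcomm p hp q hq, hmin q hq p hp hqp]
  obtain ⟨c, hc, hcne⟩ := key
  -- 0 and 1 are idempotent
  have h0idem : m 0 0 = 0 := by
    have h1 := hmono 0 h01 0 h01 0 h01 1 h11 le_rfl (by norm_num)
    rw [hunit 0 h01] at h1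
    have h2 := (hmem 0 h01 0 h01).1
    linarith
  have h1idem : m 1 1 = 1 := hunit 1 h11
  -- the idempotent set is closed
  set E : Set ℝ := Set.Icc (0:ℝ) 1 ∩ (fun x => m x x - x) ⁻¹' {0} with hE
  have hmemE : ∀ x, x ∈ E ↔ x ∈ Set.Icc (0:ℝ) 1 ∧ m x x = x := by
    intro x
    simp [hE, sub_eq_zero]
  have hfcont : ContinuousOn (fun x => m x x - x) (Set.Icc (0:ℝ) 1) := by
    apply ContinuousOn.sub _ continuousOn_id
    exact hcont.comp (continuous_id.prodMk continuous_id).continuousOn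
      (fun x hx => Set.mk_mem_prod hx hx)
  have hEclosed : IsClosed E :=
    hfcont.preimage_isClosed_of_isClosed isClosed_Icc isClosed_singleton
  -- a = sup of idempotents below c
  set A : Set ℝ := E ∩ Set.Icc 0 c with hA
  have hAclosed : IsClosed A := hEclosed.inter isClosed_Icc
  have hAne : A.Nonempty := ⟨0, (hmemE 0).2 ⟨h01, h0idem⟩, le_rfl, hc.1⟩
  have hAbdd : BddAbove A := ⟨c, fun x hx => hx.2.2⟩
  have haA : sSup A ∈ A := hAclosed.csSup_mem hAne hAbdd
  set a := sSup A with ha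
  have haE := (hmemE a).1 haA.1
  have hac : a < c := lt_of_le_of_ne haA.2.2 (fun h => hcne (h ▸ haE.2))
  -- b = inf of idempotents above c
  set B : Set ℝ := E ∩ Set.Icc c 1 with hB
  have hBclosed : IsClosed B := hEclosed.inter isClosed_Icc
  have hBne : B.Nonempty := ⟨1, (hmemE 1).2 ⟨h11, h1idem⟩, hc.2, le_rfl⟩
  have hBbdd : BddBelow B := ⟨c, fun x hx => hx.2.1⟩
  have hbB : sInf B ∈ B := hBclosed.csInf_mem hBne hBbdd
  set b := sInf B with hb
  have hbE := (hmemE b).1 hbB.1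
  have hcb : c < b := lt_of_le_of_ne hbB.2.1 (fun h => hcne (h ▸ hbE.2))
  refine ⟨a, haE.1, b, hbE.1, hac.trans hcb, haE.2, hbE.2, ?_⟩
  intro x hax hxb hxidem
  have hx : x ∈ Set.Icc (0:ℝ) 1 := ⟨haE.1.1.trans hax.le, hxb.le.trans hbE.1.2⟩
  rcases le_total x c with h | h
  · exact absurd (le_csSup hAbdd (⟨(hmemE x).2 ⟨hx, hxidem⟩, hx.1, h⟩ : x ∈ A)) (not_le.2 hax)
  · exact absurd (csInf_le hBbdd (⟨(hmemE x).2 ⟨hx, hxidem⟩, h, hx.2⟩ : x ∈ B)) (not_le.2 hxb)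
end

section
/- Let * be a continuous t-norm on [0,1] with residuum →, and suppose a < c < b where a, b are idempotent and c is not. Then c*(c → c) = c > a, so the triple of values (g-self-similarity c, similarity of g to h equal to c, similarity of f to h equal to a) violates transitivity: c*(c → c) > a. In particular, there is no [0,1]_*-valued equality α on a three-element set {f,g,h} with α(g,g)=c, α(f,g)=α(g,h)=c, α(f,h)=a. -/
open Set Filter Topology

theorem stmt18
    (m : ℝ → ℝ → ℝ)
    (hmem : ∀ x ∈ Set.Icc (0:ℝ) 1, ∀ y ∈ Set.Icc (0:ℝ) 1, m x y ∈ Set.Icc (0:ℝ) 1)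
    (hcomm : ∀ x ∈ Set.Icc (0:ℝ) 1, ∀ y ∈ Set.Icc (0:ℝ) 1, m x y = m y x)
    (hassoc : ∀ x ∈ Set.Icc (0:ℝ) 1, ∀ y ∈ Set.Icc (0:ℝ) 1, ∀ z ∈ Set.Icc (0:ℝ) 1, m (m x y) z = m x (m y z))
    (hunit : ∀ x ∈ Set.Icc (0:ℝ) 1, m x 1 = x)
    (hmono : ∀ x ∈ Set.Icc (0:ℝ) 1, ∀ x' ∈ Set.Icc (0:ℝ) 1, ∀ y ∈ Set.Icc (0:ℝ) 1, ∀ y' ∈ Set.Icc (0:ℝ) 1, x ≤ x' → y ≤ y' → m x y ≤ m x' y')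
    (hcont : ContinuousOn (fun p : ℝ × ℝ => m p.1 p.2) (Set.Icc (0:ℝ) 1 ×ˢ Set.Icc (0:ℝ) 1))
    (rr : ℝ → ℝ → ℝ)
    (hrmem : ∀ p ∈ Set.Icc (0:ℝ) 1, ∀ s ∈ Set.Icc (0:ℝ) 1, rr p s ∈ Set.Icc (0:ℝ) 1)
    (hadj : ∀ p ∈ Set.Icc (0:ℝ) 1, ∀ q ∈ Set.Icc (0:ℝ) 1, ∀ s ∈ Set.Icc (0:ℝ) 1, (m p q ≤ s ↔ q ≤ rr p s))
    (a c b : ℝ) (ha : a ∈ Set.Icc (0:ℝ) 1) (hc : c ∈ Set.Icc (0:ℝ) 1) (hb : b ∈ Set.Icc (0:ℝ) 1)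
    (hac : a < c) (hcb : c < b) (hai : m a a = a) (hbi : m b b = b) (hci : m c c ≠ c) :
    m c (rr c c) = c ∧ a < c ∧
      ¬ ∃ α : Fin 3 → Fin 3 → ℝ,
        (∀ x y, α x y ∈ Set.Icc (0:ℝ) 1) ∧
        (∀ x y, α x y ≤ min (α x x) (α y y)) ∧
        (∀ x y, α x y = α y x) ∧
        (∀ x y z, m (α y z) (rr (α y y) (α x y)) ≤ α x z) ∧
        α 1 1 = c ∧ α 0 1 = c ∧ α 1 2 = c ∧ α 0 2 = a := by
  have h01 : (1:ℝ) ∈ Set.Icc (0:ℝ) 1 := ⟨zero_le_one, le_refl 1⟩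
  have hu : m c 1 = c := hunit c hc
  have h1 : (1:ℝ) ≤ rr c c := by
    have := (hadj c hc 1 h01 c hc).mp (le_of_eq hu)
    exact this
  have hr1 : rr c c = 1 := le_antisymm (hrmem c hc c hc).2 h1
  have hmain : m c (rr c c) = c := by rw [hr1, hu]
  refine ⟨hmain, hac, ?_⟩
  rintro ⟨α, hαmem, hαmin, hαsym, hαtrans, h11, h01', h12, h02⟩
  have := hαtrans 0 1 2
  rw [h12, h11, h01', h02, hr1, hu] at this
  linarith
end
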